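/- (Equivalence of Problem 1 and Problem 2.) For a given incentive profile u (edge and base node costs nonnegative, continuous, nondecreasing), a feasible flow f satisfies the equilibrium constraint of Problem 1 (c_p(f,u) ≤ c_q(f,u) for all p, q with f_p > 0) if and only if f minimizes Φ°(g) + Σ_p g_p·u_p over feasible flows g, where Φ°(g) := Σ_{e∈E} ∫₀^{g_e} c_e(s) ds + Σ_{v∈V} ∫₀^{g_v} c_v(s) ds; consequently the feasible sets of flows in Problems 1 and 2 coincide for every u. -/

import Mathlib

/-!
With `Φ(g) = Φ°(g) + Σ_p g_p u_p` (that is, `potential`), monotonicity of the costs gives the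
first-order convexity bound `Σ_p (g_p - f_p) c_p(f,u) ≤ Φ(g) - Φ(f)` for feasible `f`, `g`:
each integral increment is at least its left Riemann rectangle, and regrouping the edge and node
sums by paths turns the rectangles into path costs. A Wardrop flow has
`Σ_p f_p c_p(f,u) ≤ Σ_p g_p c_p(f,u)`, so it minimizes `Φ`. Conversely, if `f` minimizes `Φ` and
`f_p > 0`, move mass `ε` from `p` to `q`: the bound with the roles of the two flows exchanged gives
`c_p ≤ c_q` at the perturbed flow, and continuity of the costs lets `ε → 0`.
-/

open Set MeasureTheory intervalIntegral

section RoutingGame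

variable {E V P : Type*} [Fintype E] [Fintype V] [Fintype P] [Nonempty P]
  [DecidableEq E] [DecidableEq V]

/-- Edge flow: total flow of paths containing edge `e`. -/
noncomputable def edgeFlow (pathE : P → Finset E) (f : P → ℝ) (e : E) : ℝ :=
  ∑ p ∈ Finset.univ.filter (fun p => e ∈ pathE p), f p

/-- Node flow: total flow of paths containing node `v`. -/
noncomputable def nodeFlow (pathV : P → Finset V) (f : P → ℝ) (v : V) : ℝ :=
  ∑ p ∈ Finset.univ.filter (fun p => v ∈ pathV p), f p

/-- Feasible flows: nonnegative, summing to one. -/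
def Feasible (f : P → ℝ) : Prop := (∀ p, 0 ≤ f p) ∧ ∑ p, f p = 1

/-- Path cost with additive path-specific node incentives. -/
noncomputable def pathCost (pathE : P → Finset E) (pathV : P → Finset V)
    (ce : E → ℝ → ℝ) (cv : V → ℝ → ℝ) (u : V → P → ℝ) (f : P → ℝ) (p : P) : ℝ :=
  (∑ e ∈ pathE p, ce e (edgeFlow pathE f e)) +
  (∑ v ∈ pathV p, (cv v (nodeFlow pathV f v) + u v p))

/-- Wardrop equilibrium: every used path has minimal cost. -/
def IsWardrop (pathE : P → Finset E) (pathV : P → Finset V)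
    (ce : E → ℝ → ℝ) (cv : V → ℝ → ℝ) (u : V → P → ℝ) (f : P → ℝ) : Prop :=
  ∀ p q : P, 0 < f p →
    pathCost pathE pathV ce cv u f p ≤ pathCost pathE pathV ce cv u f q

/-- The potential function `Φ(f,u)`. -/
noncomputable def potential (pathE : P → Finset E) (pathV : P → Finset V)
    (ce : E → ℝ → ℝ) (cv : V → ℝ → ℝ) (u : V → P → ℝ) (f : P → ℝ) : ℝ :=
  (∑ e, ∫ s in (0:ℝ)..(edgeFlow pathE f e), ce e s) +
  (∑ v, ∫ s in (0:ℝ)..(nodeFlow pathV f v), cv v s) +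
  (∑ p, f p * ∑ v ∈ pathV p, u v p)

/-- Social cost. -/
noncomputable def socialCost (pathE : P → Finset E) (pathV : P → Finset V)
    (ce : E → ℝ → ℝ) (cv : V → ℝ → ℝ) (u : V → P → ℝ) (f : P → ℝ) : ℝ :=
  ∑ p, f p * pathCost pathE pathV ce cv u f p

/-- The base potential `Φ°(f)` (no incentives). -/
noncomputable def basePotential (pathE : P → Finset E) (pathV : P → Finset V)
    (ce : E → ℝ → ℝ) (cv : V → ℝ → ℝ) (f : P → ℝ) : ℝ :=
  (∑ e, ∫ s in (0:ℝ)..(edgeFlow pathE f e), ce e s) +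
  (∑ v, ∫ s in (0:ℝ)..(nodeFlow pathV f v), cv v s)
section

omit [Nonempty P]

theorem MonotoneOn.mul_sub_le_integral {c : ℝ → ℝ} {a b : ℝ} (hc : MonotoneOn c (uIcc a b)) :
    (b - a) * c a ≤ ∫ x in a..b, c x := by
  rcases le_total a b with hab | hba
  · have := integral_mono_on hab intervalIntegrable_const (hc.intervalIntegrable (μ := volume))
      fun x hx => hc left_mem_uIcc (Icc_subset_uIcc hx) hx.1
    simpa [mul_comm] using this
  · have := integral_mono_on hba (hc.intervalIntegrable (μ := volume)).symm intervalIntegrable_const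
      fun x hx => hc (Icc_subset_uIcc' hx) left_mem_uIcc hx.2
    rw [integral_symm]
    simp only [intervalIntegral.integral_const, smul_eq_mul] at this
    linarith

theorem MonotoneOn.mul_sub_le_integral_sub {c : ℝ → ℝ} {s : Set ℝ} (hs : s.OrdConnected)
    (hc : MonotoneOn c s) {x₀ a b : ℝ} (h₀ : x₀ ∈ s) (ha : a ∈ s) (hb : b ∈ s) :
    (b - a) * c a ≤ (∫ x in x₀..b, c x) - ∫ x in x₀..a, c x := by
  rw [integral_interval_sub_left (hc.mono (hs.uIcc_subset h₀ hb)).intervalIntegrable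
    (hc.mono (hs.uIcc_subset h₀ ha)).intervalIntegrable]
  exact (hc.mono (hs.uIcc_subset ha hb)).mul_sub_le_integral

theorem Feasible.sum_mul_le_sum_mul {f g C : P → ℝ} (hf : Feasible f) (hg : Feasible g)
    (hC : ∀ p q, 0 < f p → C p ≤ C q) : ∑ p, f p * C p ≤ ∑ p, g p * C p := by
  obtain ⟨p₀, -, hp₀⟩ : ∃ p ∈ Finset.univ, (0 : ℝ) < f p :=
    Finset.exists_lt_of_sum_lt (by simp [hf.2])
  calc ∑ p, f p * C p ≤ ∑ p, f p * C p₀ := by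
        refine Finset.sum_le_sum fun p _ => ?_
        rcases (hf.1 p).eq_or_lt with hp | hp
        · simp [← hp]
        · exact mul_le_mul_of_nonneg_left (hC p p₀ hp) hp.le
    _ = ∑ p, g p * C p₀ := by rw [← Finset.sum_mul, ← Finset.sum_mul, hf.2, hg.2]
    _ ≤ ∑ p, g p * C p :=
        Finset.sum_le_sum fun p _ => mul_le_mul_of_nonneg_left (hC p₀ p hp₀) (hg.1 p)

section Incidence

variable {ι : Type*} [DecidableEq ι] (path : P → Finset ι)

theorem edgeFlow_sub (f g : P → ℝ) (i : ι) :
    edgeFlow path (g - f) i = edgeFlow path g i - edgeFlow path f i := by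
  simp [edgeFlow, Finset.sum_sub_distrib]

theorem sum_edgeFlow_mul [Fintype ι] (w : P → ℝ) (h : ι → ℝ) :
    ∑ i, edgeFlow path w i * h i = ∑ p, w p * ∑ i ∈ path p, h i := by
  simp only [edgeFlow, Finset.sum_mul, Finset.mul_sum, Finset.sum_filter]
  rw [Finset.sum_comm]
  simp

theorem Feasible.edgeFlow_mem_Icc {f : P → ℝ} (hf : Feasible f) (i : ι) :
    edgeFlow path f i ∈ Icc (0 : ℝ) 1 :=
  ⟨Finset.sum_nonneg fun p _ => hf.1 p, hf.2 ▸ Finset.sum_le_sum_of_subset_of_nonneg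
    (Finset.filter_subset _ _) fun p _ _ => hf.1 p⟩

theorem continuous_edgeFlow {X : Type*} [TopologicalSpace X] {φ : X → P → ℝ}
    (hφ : Continuous φ) (i : ι) : Continuous fun x => edgeFlow path (φ x) i :=
  continuous_finsetSum _ fun p _ => (continuous_apply p).comp hφ

theorem nodeFlow_eq_edgeFlow (f : P → ℝ) (i : ι) : nodeFlow path f i = edgeFlow path f i := rfl

end Incidence

variable (pathE : P → Finset E) (pathV : P → Finset V) (ce : E → ℝ → ℝ) (cv : V → ℝ → ℝ)
  (u : V → P → ℝ)

theorem sum_mul_pathCost (w f : P → ℝ) :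
    ∑ p, w p * pathCost pathE pathV ce cv u f p =
      ∑ e, edgeFlow pathE w e * ce e (edgeFlow pathE f e) +
      ∑ v, nodeFlow pathV w v * cv v (nodeFlow pathV f v) + ∑ p, w p * ∑ v ∈ pathV p, u v p := by
  simp only [pathCost, nodeFlow_eq_edgeFlow, sum_edgeFlow_mul, Finset.sum_add_distrib, mul_add,
    add_assoc]

theorem sum_sub_mul_pathCost_le_potential_sub
    (hce_mono : ∀ e, MonotoneOn (ce e) (Icc (0:ℝ) 1))
    (hcv_mono : ∀ v, MonotoneOn (cv v) (Icc (0:ℝ) 1))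
    {f g : P → ℝ} (hf : Feasible f) (hg : Feasible g) :
    ∑ p, (g p - f p) * pathCost pathE pathV ce cv u f p ≤
      potential pathE pathV ce cv u g - potential pathE pathV ce cv u f := by
  have h0 : (0 : ℝ) ∈ Icc (0 : ℝ) 1 := left_mem_Icc.2 zero_le_one
  have hE := Finset.sum_le_sum fun e (_ : e ∈ Finset.univ) =>
    (hce_mono e).mul_sub_le_integral_sub ordConnected_Icc h0 (hf.edgeFlow_mem_Icc pathE e)
      (hg.edgeFlow_mem_Icc pathE e)
  have hV := Finset.sum_le_sum fun v (_ : v ∈ Finset.univ) =>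
    (hcv_mono v).mul_sub_le_integral_sub ordConnected_Icc h0 (hf.edgeFlow_mem_Icc pathV v)
      (hg.edgeFlow_mem_Icc pathV v)
  have hu : ∑ p, (g p - f p) * ∑ v ∈ pathV p, u v p =
      ∑ p, g p * ∑ v ∈ pathV p, u v p - ∑ p, f p * ∑ v ∈ pathV p, u v p := by
    simp only [sub_mul, Finset.sum_sub_distrib]
  have := sum_mul_pathCost pathE pathV ce cv u (g - f) f
  simp only [Pi.sub_apply, nodeFlow_eq_edgeFlow, edgeFlow_sub] at this hE hV
  simp only [potential, nodeFlow_eq_edgeFlow, Finset.sum_sub_distrib] at hE hV ⊢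
  linarith

omit [Fintype E] [Fintype V] in
theorem continuousOn_pathCost (hce_cont : ∀ e, ContinuousOn (ce e) (Icc (0:ℝ) 1))
    (hcv_cont : ∀ v, ContinuousOn (cv v) (Icc (0:ℝ) 1)) {X : Type*} [TopologicalSpace X]
    {φ : X → P → ℝ} {s : Set X} (hφ : Continuous φ) (hs : ∀ x ∈ s, Feasible (φ x)) (r : P) :
    ContinuousOn (fun x => pathCost pathE pathV ce cv u (φ x) r) s := by
  refine (continuousOn_finsetSum _ fun e _ => ?_).add (continuousOn_finsetSum _ fun v _ => ?_)
  · exact (hce_cont e).comp (continuous_edgeFlow pathE hφ e).continuousOn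
      fun x hx => (hs x hx).edgeFlow_mem_Icc pathE e
  · exact ((hcv_cont v).comp (continuous_edgeFlow pathV hφ v).continuousOn
      fun x hx => (hs x hx).edgeFlow_mem_Icc pathV v).add continuousOn_const

theorem IsWardrop.isMinOn_potential (hce_mono : ∀ e, MonotoneOn (ce e) (Icc (0:ℝ) 1))
    (hcv_mono : ∀ v, MonotoneOn (cv v) (Icc (0:ℝ) 1)) {f : P → ℝ} (hf : Feasible f)
    (hw : IsWardrop pathE pathV ce cv u f) :
    IsMinOn (potential pathE pathV ce cv u) {g | Feasible g} f :=
  isMinOn_iff.2 fun g hg => by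
    have hlin := sum_sub_mul_pathCost_le_potential_sub pathE pathV ce cv u hce_mono hcv_mono hf hg
    simp only [sub_mul, Finset.sum_sub_distrib] at hlin
    linarith [hf.sum_mul_le_sum_mul hg hw]

def transferFlow [DecidableEq P] (f : P → ℝ) (p q : P) (ε : ℝ) : P → ℝ :=
  f - Pi.single p ε + Pi.single q ε

section Transfer

variable [DecidableEq P] {f : P → ℝ} {p q : P}

omit [Fintype P] in
@[simp]
theorem transferFlow_zero : transferFlow f p q 0 = f := by
  simp [transferFlow]

omit [Fintype P] in
theorem continuous_transferFlow : Continuous (transferFlow f p q) :=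
  (continuous_const.sub (continuous_single (A := fun _ => ℝ) p)).add
    (continuous_single (A := fun _ => ℝ) q)

theorem Feasible.transferFlow (hf : Feasible f) (hpq : p ≠ q) {ε : ℝ} (hε : ε ∈ Icc 0 (f p)) :
    Feasible (transferFlow f p q ε) := by
  refine ⟨fun r => ?_, ?_⟩
  · rcases eq_or_ne r p with rfl | hrp
    · simp [_root_.transferFlow, hpq, hε.2]
    · have hfr := hf.1 r
      have hq : 0 ≤ Pi.single (M := fun _ => ℝ) q ε r := by
        rcases eq_or_ne r q with rfl | hrq <;> simp [*, hε.1]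
      simp [_root_.transferFlow, hrp]
      linarith
  · simp [_root_.transferFlow, Finset.sum_add_distrib, Finset.sum_sub_distrib, hf.2]

theorem sum_sub_transferFlow_mul (C : P → ℝ) (ε : ℝ) :
    ∑ r, (f r - transferFlow f p q ε r) * C r = ε * (C p - C q) := by
  have hdiff (r : P) :
      f r - transferFlow f p q ε r = (Pi.single p ε - Pi.single q ε : P → ℝ) r := by
    simp only [transferFlow, Pi.add_apply, Pi.sub_apply]
    ring
  simp only [hdiff, Pi.sub_apply, sub_mul, Finset.sum_sub_distrib, ← Pi.single_mul_left_apply,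
    Finset.sum_pi_single', Finset.mem_univ, if_true, mul_sub]

end Transfer

theorem isWardrop_of_isMinOn_potential (hce_cont : ∀ e, ContinuousOn (ce e) (Icc (0:ℝ) 1))
    (hce_mono : ∀ e, MonotoneOn (ce e) (Icc (0:ℝ) 1))
    (hcv_cont : ∀ v, ContinuousOn (cv v) (Icc (0:ℝ) 1))
    (hcv_mono : ∀ v, MonotoneOn (cv v) (Icc (0:ℝ) 1)) {f : P → ℝ} (hf : Feasible f)
    (hmin : IsMinOn (potential pathE pathV ce cv u) {g | Feasible g} f) :
    IsWardrop pathE pathV ce cv u f := by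
  classical
  intro p q hp
  rcases eq_or_ne p q with rfl | hpq
  · exact le_rfl
  let g := transferFlow f p q
  have hg : ∀ ε ∈ Icc 0 (f p), Feasible (g ε) := fun ε hε => hf.transferFlow hpq hε
  have hcost (r : P) : ContinuousWithinAt (fun ε => pathCost pathE pathV ce cv u (g ε) r)
      (Ioc 0 (f p)) 0 :=
    (continuousOn_pathCost pathE pathV ce cv u hce_cont hcv_cont continuous_transferFlow hg r
      0 (left_mem_Icc.2 hp.le)).mono Ioc_subset_Icc_self
  have hle : ∀ ε ∈ Ioc 0 (f p),
      pathCost pathE pathV ce cv u (g ε) p ≤ pathCost pathE pathV ce cv u (g ε) q := by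
    intro ε hε
    have hgε := hg ε (Ioc_subset_Icc_self hε)
    have hlin := sum_sub_mul_pathCost_le_potential_sub pathE pathV ce cv u hce_mono hcv_mono
      hgε hf
    rw [sum_sub_transferFlow_mul] at hlin
    have hmin' := isMinOn_iff.1 hmin (g ε) hgε
    exact sub_nonpos.1 (nonpos_of_mul_nonpos_right (by linarith) hε.1)
  have h0 : (0 : ℝ) ∈ closure (Ioc 0 (f p)) := by
    rw [closure_Ioc hp.ne]
    exact left_mem_Icc.2 hp.le
  simpa [g] using ContinuousWithinAt.closure_le h0 (hcost p) (hcost q) hle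

end

theorem problem1_equiv_problem2_general
    (pathE : P → Finset E) (pathV : P → Finset V)
    (ce : E → ℝ → ℝ) (cv : V → ℝ → ℝ) (u : V → P → ℝ)
    (hce_cont : ∀ e, ContinuousOn (ce e) (Set.Icc (0:ℝ) 1))
    (hce_mono : ∀ e, MonotoneOn (ce e) (Set.Icc (0:ℝ) 1))
    (hcv_cont : ∀ v, ContinuousOn (cv v) (Set.Icc (0:ℝ) 1))
    (hcv_mono : ∀ v, MonotoneOn (cv v) (Set.Icc (0:ℝ) 1))
 :
    (∀ f : P → ℝ, Feasible f →
      (IsWardrop pathE pathV ce cv u f ↔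
        ∀ g : P → ℝ, Feasible g →
          basePotential pathE pathV ce cv f + (∑ p, f p * ∑ v ∈ pathV p, u v p) ≤
            basePotential pathE pathV ce cv g + (∑ p, g p * ∑ v ∈ pathV p, u v p))) ∧
    {f : P → ℝ | Feasible f ∧ IsWardrop pathE pathV ce cv u f} =
      {f : P → ℝ | Feasible f ∧
        ∀ g : P → ℝ, Feasible g →
          basePotential pathE pathV ce cv f + (∑ p, f p * ∑ v ∈ pathV p, u v p) ≤
            basePotential pathE pathV ce cv g + (∑ p, g p * ∑ v ∈ pathV p, u v p)} := by
  have key (f : P → ℝ) (hf : Feasible f) :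
      IsWardrop pathE pathV ce cv u f ↔ IsMinOn (potential pathE pathV ce cv u) {g | Feasible g} f :=
    ⟨IsWardrop.isMinOn_potential pathE pathV ce cv u hce_mono hcv_mono hf,
      isWardrop_of_isMinOn_potential pathE pathV ce cv u hce_cont hce_mono hcv_cont hcv_mono hf⟩
  have equiv (f : P → ℝ) (hf : Feasible f) := (key f hf).trans isMinOn_iff
  exact ⟨equiv, Set.ext fun f => and_congr_right (equiv f)⟩

/-- **Equivalence of Problem 1 and Problem 2.** A feasible flow satisfies the
Wardrop equilibrium constraint iff it minimizes `Φ°(g) + Σ_p g_p·u_p` over feasible flows;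
consequently the feasible sets of flows in the two problems coincide. -/
theorem problem1_equiv_problem2
    (pathE : P → Finset E) (pathV : P → Finset V)
    (ce : E → ℝ → ℝ) (cv : V → ℝ → ℝ) (u : V → P → ℝ)
    (hce_nn : ∀ e, ∀ x ∈ Set.Icc (0:ℝ) 1, 0 ≤ ce e x)
    (hce_cont : ∀ e, ContinuousOn (ce e) (Set.Icc (0:ℝ) 1))
    (hce_mono : ∀ e, MonotoneOn (ce e) (Set.Icc (0:ℝ) 1))
    (hcv_nn : ∀ v, ∀ x ∈ Set.Icc (0:ℝ) 1, 0 ≤ cv v x)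
    (hcv_cont : ∀ v, ContinuousOn (cv v) (Set.Icc (0:ℝ) 1))
    (hcv_mono : ∀ v, MonotoneOn (cv v) (Set.Icc (0:ℝ) 1))
 :
    (∀ f : P → ℝ, Feasible f →
      (IsWardrop pathE pathV ce cv u f ↔
        ∀ g : P → ℝ, Feasible g →
          basePotential pathE pathV ce cv f + (∑ p, f p * ∑ v ∈ pathV p, u v p) ≤
            basePotential pathE pathV ce cv g + (∑ p, g p * ∑ v ∈ pathV p, u v p))) ∧
    {f : P → ℝ | Feasible f ∧ IsWardrop pathE pathV ce cv u f} =
      {f : P → ℝ | Feasible f ∧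
        ∀ g : P → ℝ, Feasible g →
          basePotential pathE pathV ce cv f + (∑ p, f p * ∑ v ∈ pathV p, u v p) ≤
            basePotential pathE pathV ce cv g + (∑ p, g p * ∑ v ∈ pathV p, u v p)} :=
  problem1_equiv_problem2_general pathE pathV ce cv u hce_cont hce_mono hcv_cont hcv_mono

end RoutingGame
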